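/- arXiv:1210.7348 — 2 statements merged into one kernel-verified Lean document; each statement's English description precedes it below -/
import Mathlib

section
/- Let H be a Hilbert space, F : D(F) ⊆ H → H with Fréchet derivative F'(f), and suppose F satisfies the tangential cone condition ‖F(f̃)−F(f)−F'(f)(f̃−f)‖ ≤ η‖F(f̃)−F(f)‖ for all f, f̃ in a ball B_ρ(f₀) ⊆ D(F), with 0 < η < 1/2. Let f* ∈ B_ρ(f₀) solve F(f*) = g, let ‖g − g^δ‖ ≤ δ, and suppose ‖F'(f)‖ ≤ 1 on B_ρ(f₀). If f_{k+1} = f_k + F'(f_k)*(g^δ − F(f_k)) and ‖g^δ − F(f_k)‖ ≥ τδ with τ > 2(1+η)/(1−2η), then ‖f_{k+1} − f*‖ ≤ ‖f_k − f*‖ whenever f_k ∈ B_ρ(f₀). -/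
/-!
Write `e = f_k - f*` and `r = g^δ - F(f_k)`. Expanding the square and using `‖F'(f_k)*‖ ≤ 1`,
`‖f_{k+1} - f*‖² ≤ ‖e‖² + 2⟪F'(f_k) e, r⟫ + ‖r‖²`. The tangential cone condition says that
`F'(f_k) e` is `-r` up to the noise `g^δ - g` and an error of size `η ‖g - F(f_k)‖ ≤ η (δ + ‖r‖)`,
so `2⟪F'(f_k) e, r⟫ + ‖r‖² ≤ ‖r‖ (2(1+η)δ - (1-2η)‖r‖)`, which the discrepancy principle
`‖r‖ ≥ τδ` makes nonpositive.
-/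

open ContinuousLinearMap

open scoped RealInnerProductSpace

section Adjoint

variable {E K : Type*} [NormedAddCommGroup E] [InnerProductSpace ℝ E] [CompleteSpace E]
  [NormedAddCommGroup K] [InnerProductSpace ℝ K] [CompleteSpace K]

theorem norm_add_adjoint_apply_sq_le {A : E →L[ℝ] K} (hA : ‖A‖ ≤ 1) (e : E) (r : K) :
    ‖e + adjoint A r‖ ^ 2 ≤ ‖e‖ ^ 2 + 2 * ⟪A e, r⟫ + ‖r‖ ^ 2 := by
  have hnorm : ‖adjoint A r‖ ≤ ‖r‖ :=
    calc ‖adjoint A r‖ ≤ ‖adjoint A‖ * ‖r‖ := (adjoint A).le_opNorm r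
      _ = ‖A‖ * ‖r‖ := by rw [LinearIsometryEquiv.norm_map]
      _ ≤ ‖r‖ := mul_le_of_le_one_left (norm_nonneg r) hA
  have hsq : ‖adjoint A r‖ ^ 2 ≤ ‖r‖ ^ 2 := pow_le_pow_left₀ (norm_nonneg _) hnorm 2
  rw [norm_add_sq_real, adjoint_inner_right, real_inner_comm]
  linarith

theorem norm_add_adjoint_apply_le {A : E →L[ℝ] K} (hA : ‖A‖ ≤ 1) {e : E} {r : K}
    (h : 2 * ⟪A e, r⟫ + ‖r‖ ^ 2 ≤ 0) : ‖e + adjoint A r‖ ≤ ‖e‖ := by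
  refine le_of_sq_le_sq ?_ (norm_nonneg e)
  linarith [norm_add_adjoint_apply_sq_le hA e r]

end Adjoint

/-- Here `p = F(f_k)`, `y = g = F(f*)`, `yδ = g^δ` and `u = f_k - f*`, so that the first
hypothesis is the tangential cone condition between `f_k` and `f*`. -/
theorem two_inner_add_norm_sq_le_of_tangential_cone {E K : Type*} [NormedAddCommGroup E]
    [InnerProductSpace ℝ E] [NormedAddCommGroup K] [InnerProductSpace ℝ K]
    {A : E →L[ℝ] K} {u : E} {p y yδ : K} {η δ : ℝ} (hη : 0 ≤ η)
    (hcone : ‖y - p + A u‖ ≤ η * ‖y - p‖) (hnoise : ‖y - yδ‖ ≤ δ) :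
    2 * ⟪A u, yδ - p⟫ + ‖yδ - p‖ ^ 2 ≤
      ‖yδ - p‖ * (2 * (1 + η) * δ - (1 - 2 * η) * ‖yδ - p‖) := by
  set r := yδ - p
  set w := y - p + A u
  have hdecomp : A u = w - (y - yδ) - r := by simp only [w, r]; abel
  have hw : ‖w‖ ≤ η * (δ + ‖r‖) :=
    calc ‖w‖ ≤ η * ‖(y - yδ) + r‖ := by simpa only [w, r, sub_add_sub_cancel] using hcone
      _ ≤ η * (δ + ‖r‖) := by gcongr; exact (norm_add_le _ _).trans (by linarith)
  have hinner : ⟪A u, r⟫ ≤ ‖r‖ * (η * (δ + ‖r‖)) + ‖r‖ * δ - ‖r‖ ^ 2 := by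
    rw [hdecomp, inner_sub_left, inner_sub_left, real_inner_self_eq_norm_sq]
    have h₁ := (real_inner_le_norm w r).trans (mul_le_mul_of_nonneg_right hw (norm_nonneg r))
    have h₂ := ((neg_le_abs _).trans (abs_real_inner_le_norm (y - yδ) r)).trans
      (mul_le_mul_of_nonneg_right hnoise (norm_nonneg r))
    linarith
  linear_combination 2 * hinner

theorem mul_sub_nonpos_of_discrepancy {η τ δ R : ℝ} (hη : η < 1 / 2) (hδ : 0 ≤ δ)
    (hτ : τ > 2 * (1 + η) / (1 - 2 * η)) (hR : 0 ≤ R) (hdisc : R ≥ τ * δ) :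
    R * (2 * (1 + η) * δ - (1 - 2 * η) * R) ≤ 0 := by
  have hpos : 0 < 1 - 2 * η := by linarith
  have hτ' : 2 * (1 + η) < τ * (1 - 2 * η) := (div_lt_iff₀ hpos).mp hτ
  have : 2 * (1 + η) * δ ≤ (1 - 2 * η) * R := by nlinarith
  exact mul_nonpos_of_nonneg_of_nonpos hR (by linarith)

theorem stmt8_general {H : Type*} [NormedAddCommGroup H] [InnerProductSpace ℝ H]
    [CompleteSpace H]
    (F : H → H) (F' : H → H →L[ℝ] H)
    (f₀ : H) (ρ : ℝ)
    (η : ℝ) (hη0 : 0 < η) (hη : η < 1 / 2)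
    (htcc : ∀ f ∈ Metric.closedBall f₀ ρ, ∀ ftilde ∈ Metric.closedBall f₀ ρ,
      ‖F ftilde - F f - F' f (ftilde - f)‖ ≤ η * ‖F ftilde - F f‖)
    (hF'le : ∀ f ∈ Metric.closedBall f₀ ρ, ‖F' f‖ ≤ 1)
    (fstar : H) (hfstar : fstar ∈ Metric.closedBall f₀ ρ)
    (g gδ : H) (hsol : F fstar = g)
    (δ : ℝ) (hδ : 0 ≤ δ) (hnoise : ‖g - gδ‖ ≤ δ)
    (τ : ℝ) (hτ : τ > 2 * (1 + η) / (1 - 2 * η))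
    (fk fk1 : H) (hfk : fk ∈ Metric.closedBall f₀ ρ)
    (hstep : fk1 = fk + (ContinuousLinearMap.adjoint (F' fk)) (gδ - F fk))
    (hdisc : ‖gδ - F fk‖ ≥ τ * δ) :
    ‖fk1 - fstar‖ ≤ ‖fk - fstar‖ := by
  have hcone : ‖g - F fk + F' fk (fk - fstar)‖ ≤ η * ‖g - F fk‖ := by
    have h := htcc fk hfk fstar hfstar
    rwa [hsol, ← neg_sub fk fstar, map_neg, sub_neg_eq_add] at h
  have hstep' : fk1 - fstar = (fk - fstar) + adjoint (F' fk) (gδ - F fk) := by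
    rw [hstep]; abel
  rw [hstep']
  refine norm_add_adjoint_apply_le (hF'le fk hfk) ?_
  exact (two_inner_add_norm_sq_le_of_tangential_cone hη0.le hcone hnoise).trans
    (mul_sub_nonpos_of_discrepancy hη hδ hτ (norm_nonneg _) hdisc)

/-- Monotonicity of the Landweber iteration error under the
tangential cone condition (η < 1/2), scaling ‖F'(f)‖ ≤ 1, and the discrepancy
condition ‖g^δ − F(f_k)‖ ≥ τδ with τ > 2(1+η)/(1−2η). -/
theorem stmt8 {H : Type*} [NormedAddCommGroup H] [InnerProductSpace ℝ H]
    [CompleteSpace H]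
    (F : H → H) (F' : H → H →L[ℝ] H)
    (f₀ : H) (ρ : ℝ) (hρ : 0 < ρ)
    (η : ℝ) (hη0 : 0 < η) (hη : η < 1 / 2)
    (htcc : ∀ f ∈ Metric.closedBall f₀ ρ, ∀ ftilde ∈ Metric.closedBall f₀ ρ,
      ‖F ftilde - F f - F' f (ftilde - f)‖ ≤ η * ‖F ftilde - F f‖)
    (hF'le : ∀ f ∈ Metric.closedBall f₀ ρ, ‖F' f‖ ≤ 1)
    (fstar : H) (hfstar : fstar ∈ Metric.closedBall f₀ ρ)
    (g gδ : H) (hsol : F fstar = g)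
    (δ : ℝ) (hδ : 0 ≤ δ) (hnoise : ‖g - gδ‖ ≤ δ)
    (τ : ℝ) (hτ : τ > 2 * (1 + η) / (1 - 2 * η))
    (fk fk1 : H) (hfk : fk ∈ Metric.closedBall f₀ ρ)
    (hstep : fk1 = fk + (ContinuousLinearMap.adjoint (F' fk)) (gδ - F fk))
    (hdisc : ‖gδ - F fk‖ ≥ τ * δ) :
    ‖fk1 - fstar‖ ≤ ‖fk - fstar‖ :=
  stmt8_general F F' f₀ ρ η hη0 hη htcc hF'le fstar hfstar g gδ hsol δ hδ hnoise τ hτ fk fk1 hfk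
    hstep hdisc
end

section
/- Under the hypotheses of the monotonicity result for Landweber iteration (tangential cone condition with η < 1/2, ‖F'‖ ≤ 1, exact solution f* ∈ B_ρ(f₀), stopping rule ‖g^δ−F(f_k)‖ ≥ τδ with τ > 2(1+η)/(1−2η)): the stopping index k_* satisfies k_* (τδ)² ≤ Σ_{k=0}^{k_*−1} ‖g^δ − F(f_k)‖² ≤ τ ‖f* − f₀‖² / ((1−2η)τ − 2(1+η)). In particular k_* is finite for δ > 0. -/
/-!
Each Landweber step decreases the squared error `‖f_k - f*‖²` by at least
`(1 - 2η)‖r_k‖² - 2(1 + η)δ‖r_k‖`, where `r_k = g^δ - F(f_k)` is the residual: expanding the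
square, the cross term `⟪F'(f_k)(f_k - f*), r_k⟫` is controlled by the tangential cone condition
and the noise level, and the quadratic term by `‖F'(f_k)‖ ≤ 1`. As long as the discrepancy
principle has not stopped, `τδ ≤ ‖r_k‖`, so this decrease dominates
`((1 - 2η)τ - 2(1 + η))/τ · ‖r_k‖²`. Summing the telescoping inequalities bounds the sum of the
squared residuals by `τ‖f* - f₀‖² / ((1 - 2η)τ - 2(1 + η))`, and each of its `k_*` terms is at
least `(τδ)²`.
-/

open Finset

open scoped InnerProductSpace

section LandweberStep

variable {X Y : Type*} [NormedAddCommGroup X] [InnerProductSpace ℝ X]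
  [NormedAddCommGroup Y] [InnerProductSpace ℝ Y]

theorem inner_apply_sub_residual_le (A : X →L[ℝ] Y) {f fstar : X} {g gδ y : Y} {η δ : ℝ}
    (hη : 0 ≤ η) (htcc : ‖g - y - A (fstar - f)‖ ≤ η * ‖g - y‖) (hnoise : ‖g - gδ‖ ≤ δ) :
    ⟪A (f - fstar), gδ - y⟫_ℝ ≤
      η * (δ + ‖gδ - y‖) * ‖gδ - y‖ + δ * ‖gδ - y‖ - ‖gδ - y‖ ^ 2 := by
  have hdecomp : A (f - fstar) = (g - y - A (fstar - f)) - (g - gδ) - (gδ - y) := by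
    rw [← neg_sub fstar f, map_neg]; abel
  set r := gδ - y
  have hlin : ⟪g - y - A (fstar - f), r⟫_ℝ ≤ η * (δ + ‖r‖) * ‖r‖ := by
    have hgy : ‖g - y‖ ≤ δ + ‖r‖ :=
      calc ‖g - y‖ = ‖(g - gδ) + r‖ := by rw [sub_add_sub_cancel]
        _ ≤ δ + ‖r‖ := (norm_add_le _ _).trans (by gcongr)
    calc ⟪g - y - A (fstar - f), r⟫_ℝ ≤ ‖g - y - A (fstar - f)‖ * ‖r‖ := real_inner_le_norm _ _
      _ ≤ η * (δ + ‖r‖) * ‖r‖ := by gcongr; exact htcc.trans (by gcongr)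
  have hnoise' : -(δ * ‖r‖) ≤ ⟪g - gδ, r⟫_ℝ :=
    calc -(δ * ‖r‖) ≤ -(‖g - gδ‖ * ‖r‖) := by gcongr
      _ ≤ ⟪g - gδ, r⟫_ℝ := neg_le_of_abs_le (abs_real_inner_le_norm _ _)
  rw [hdecomp, inner_sub_left, inner_sub_left, real_inner_self_eq_norm_sq]
  linarith

variable [CompleteSpace X] [CompleteSpace Y]

theorem norm_add_adjoint_sub_sq_le {A : X →L[ℝ] Y} (hA : ‖A‖ ≤ 1) {f fstar : X} {g gδ y : Y}
    {η δ : ℝ} (hη : 0 ≤ η) (htcc : ‖g - y - A (fstar - f)‖ ≤ η * ‖g - y‖)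
    (hnoise : ‖g - gδ‖ ≤ δ) :
    ‖f + ContinuousLinearMap.adjoint A (gδ - y) - fstar‖ ^ 2 ≤
      ‖f - fstar‖ ^ 2 - (1 - 2 * η) * ‖gδ - y‖ ^ 2 + 2 * (1 + η) * δ * ‖gδ - y‖ := by
  set r := gδ - y
  have hcross : ⟪f - fstar, ContinuousLinearMap.adjoint A r⟫_ℝ = ⟪A (f - fstar), r⟫_ℝ :=
    ContinuousLinearMap.adjoint_inner_right A _ _
  have hadj : ‖ContinuousLinearMap.adjoint A r‖ ≤ ‖r‖ := by
    refine ((ContinuousLinearMap.adjoint A).le_opNorm r).trans ?_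
    rw [LinearIsometryEquiv.norm_map]
    exact mul_le_of_le_one_left (norm_nonneg r) hA
  have hadj_sq : ‖ContinuousLinearMap.adjoint A r‖ ^ 2 ≤ ‖r‖ ^ 2 := by gcongr
  rw [add_sub_right_comm, norm_add_sq_real, hcross]
  linarith [inner_apply_sub_residual_le A hη htcc hnoise]

end LandweberStep

theorem mul_sq_le_of_discrepancy {η τ δ r : ℝ} (hη : -1 ≤ η) (hr : 0 ≤ r)
    (hdisc : τ * δ ≤ r) :
    ((1 - 2 * η) * τ - 2 * (1 + η)) * r ^ 2 ≤
      τ * ((1 - 2 * η) * r ^ 2 - 2 * (1 + η) * δ * r) := by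
  have : 0 ≤ 2 * (1 + η) * r * (r - τ * δ) := by
    apply mul_nonneg (mul_nonneg _ hr) <;> linarith
  linarith

theorem stmt9_general {H : Type*} [NormedAddCommGroup H] [InnerProductSpace ℝ H]
    [CompleteSpace H]
    (F : H → H) (F' : H → H →L[ℝ] H)
    (f₀ : H) (ρ : ℝ)
    (η : ℝ) (hη0 : 0 < η) (hη : η < 1 / 2)
    (htcc : ∀ f ∈ Metric.closedBall f₀ ρ, ∀ ftilde ∈ Metric.closedBall f₀ ρ,
      ‖F ftilde - F f - F' f (ftilde - f)‖ ≤ η * ‖F ftilde - F f‖)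
    (hF'le : ∀ f ∈ Metric.closedBall f₀ ρ, ‖F' f‖ ≤ 1)
    (fstar : H) (hfstar : fstar ∈ Metric.closedBall f₀ ρ)
    (g gδ : H) (hsol : F fstar = g)
    (δ : ℝ) (hnoise : ‖g - gδ‖ ≤ δ)
    (τ : ℝ) (hτ : τ > 2 * (1 + η) / (1 - 2 * η))
    (f : ℕ → H) (hf0 : f 0 = f₀)
    (hstep : ∀ k, f (k + 1) = f k + (ContinuousLinearMap.adjoint (F' (f k))) (gδ - F (f k)))
    (hball : ∀ k, f k ∈ Metric.closedBall f₀ ρ)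
    (kstar : ℕ) (hkstar : ∀ k < kstar, ‖gδ - F (f k)‖ ≥ τ * δ) :
    (kstar : ℝ) * (τ * δ) ^ 2 ≤ ∑ k ∈ Finset.range kstar, ‖gδ - F (f k)‖ ^ 2 ∧
      ∑ k ∈ Finset.range kstar, ‖gδ - F (f k)‖ ^ 2 ≤
        τ * ‖fstar - f₀‖ ^ 2 / ((1 - 2 * η) * τ - 2 * (1 + η)) := by
  have h2η : 0 < 1 - 2 * η := by linarith
  have hτ0 : 0 < τ := (div_pos (by linarith) h2η).trans hτ
  have hc : 0 < (1 - 2 * η) * τ - 2 * (1 + η) := by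
    have := (div_lt_iff₀ h2η).mp hτ; linarith
  have hτδ : 0 ≤ τ * δ := mul_nonneg hτ0.le ((norm_nonneg _).trans hnoise)
  have hdecrease : ∀ k < kstar, ((1 - 2 * η) * τ - 2 * (1 + η)) * ‖gδ - F (f k)‖ ^ 2 ≤
      τ * ‖f k - fstar‖ ^ 2 - τ * ‖f (k + 1) - fstar‖ ^ 2 := by
    intro k hk
    have hstep_le := norm_add_adjoint_sub_sq_le (hF'le _ (hball k)) hη0.le
      (hsol ▸ htcc _ (hball k) _ hfstar) hnoise
    rw [← hstep] at hstep_le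
    rw [← mul_sub]
    exact (mul_sq_le_of_discrepancy (by linarith) (norm_nonneg _) (hkstar k hk)).trans
      (mul_le_mul_of_nonneg_left (by linarith) hτ0.le)
  refine ⟨?_, ?_⟩
  · simpa using card_nsmul_le_sum (range kstar) _ _ fun k hk =>
      pow_le_pow_left₀ hτδ (hkstar k (mem_range.mp hk)) 2
  · rw [le_div_iff₀ hc, mul_comm]
    calc ((1 - 2 * η) * τ - 2 * (1 + η)) * ∑ k ∈ range kstar, ‖gδ - F (f k)‖ ^ 2
        ≤ ∑ k ∈ range kstar, (τ * ‖f k - fstar‖ ^ 2 - τ * ‖f (k + 1) - fstar‖ ^ 2) := by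
          rw [mul_sum]; exact sum_le_sum fun k hk => hdecrease k (mem_range.mp hk)
      _ = τ * ‖f 0 - fstar‖ ^ 2 - τ * ‖f kstar - fstar‖ ^ 2 :=
          sum_range_sub' (fun k => τ * ‖f k - fstar‖ ^ 2) kstar
      _ ≤ τ * ‖fstar - f₀‖ ^ 2 := by
          rw [hf0, norm_sub_rev]; have := sq_nonneg ‖f kstar - fstar‖; nlinarith

/-- Bound on the stopping index of the Landweber iteration under
the discrepancy principle:
k_*(τδ)² ≤ Σ_{k<k_*} ‖g^δ − F(f_k)‖² ≤ τ‖f* − f₀‖²/((1−2η)τ − 2(1+η)). -/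
theorem stmt9 {H : Type*} [NormedAddCommGroup H] [InnerProductSpace ℝ H]
    [CompleteSpace H]
    (F : H → H) (F' : H → H →L[ℝ] H)
    (f₀ : H) (ρ : ℝ) (hρ : 0 < ρ)
    (η : ℝ) (hη0 : 0 < η) (hη : η < 1 / 2)
    (htcc : ∀ f ∈ Metric.closedBall f₀ ρ, ∀ ftilde ∈ Metric.closedBall f₀ ρ,
      ‖F ftilde - F f - F' f (ftilde - f)‖ ≤ η * ‖F ftilde - F f‖)
    (hF'le : ∀ f ∈ Metric.closedBall f₀ ρ, ‖F' f‖ ≤ 1)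
    (fstar : H) (hfstar : fstar ∈ Metric.closedBall f₀ ρ)
    (g gδ : H) (hsol : F fstar = g)
    (δ : ℝ) (hδ : 0 < δ) (hnoise : ‖g - gδ‖ ≤ δ)
    (τ : ℝ) (hτ : τ > 2 * (1 + η) / (1 - 2 * η))
    (f : ℕ → H) (hf0 : f 0 = f₀)
    (hstep : ∀ k, f (k + 1) = f k + (ContinuousLinearMap.adjoint (F' (f k))) (gδ - F (f k)))
    (hball : ∀ k, f k ∈ Metric.closedBall f₀ ρ)
    (kstar : ℕ) (hkstar : ∀ k < kstar, ‖gδ - F (f k)‖ ≥ τ * δ) :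
    (kstar : ℝ) * (τ * δ) ^ 2 ≤ ∑ k ∈ Finset.range kstar, ‖gδ - F (f k)‖ ^ 2 ∧
      ∑ k ∈ Finset.range kstar, ‖gδ - F (f k)‖ ^ 2 ≤
        τ * ‖fstar - f₀‖ ^ 2 / ((1 - 2 * η) * τ - 2 * (1 + η)) :=
  stmt9_general F F' f₀ ρ η hη0 hη htcc hF'le fstar hfstar g gδ hsol δ hnoise τ hτ f hf0 hstep hball
    kstar hkstar
end
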